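/- For n = 2^m and s ≥ 1, let z_1,…,z_n ∈ [0,1)^{s+1} be a stratified (t,m,s+1)-net in base 2, and write z_i = (v_i, u_i) with v_i ∈ [0,1) and u_i ∈ [0,1)^s. For L ≥ 2, let β_ℓ = 2^{−κ_ℓ} with integers 1 ≤ κ_1 ≤ κ_2 ≤ ⋯ ≤ κ_L < m satisfying Σ_{ℓ=1}^L β_ℓ = 1, and set B_0 = 0, B_ℓ = Σ_{r≤ℓ} β_r. Then for each ℓ = 1,…,L, the points u_i for which B_{ℓ−1} ≤ v_i < B_ℓ form a (t_ℓ, m_ℓ, s)-net in base 2 with m_ℓ = m − κ_ℓ and t_ℓ = min(t, m_ℓ). -/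
import Mathlib


open scoped Classical

/-- The points `x i` for `i` in the index set `S` form a `(t,m,d)`-net in base 2:
`S` has cardinality `2^m`, and every elementary interval in base 2 of volume
`2^{-|k|}` with `|k| + t ≤ m` contains exactly `2^{m-|k|}` of the points. -/
def IsNetOn (t m d : ℕ) {ι : Type*} (S : Finset ι) (x : ι → Fin d → ℝ) : Prop :=
  S.card = 2 ^ m ∧
  ∀ k c : Fin d → ℕ, (∀ j, c j < 2 ^ k j) → (∑ j, k j) + t ≤ m →
    (S.filter (fun i =>
        ∀ j, (c j : ℝ) / 2 ^ k j ≤ x i j ∧ x i j < ((c j : ℝ) + 1) / 2 ^ k j)).card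
      = 2 ^ (m - ∑ j, k j)

/-- A list of points `w 0, …, w (n-1)` in `[0,1)` is *stratified* if each interval
`[k/n, (k+1)/n)`, `k = 0, …, n-1`, contains exactly one of the points. -/
def Stratified (n : ℕ) (w : Fin n → ℝ) : Prop :=
  ∀ k : Fin n, ∃! i : Fin n, (k : ℝ) / n ≤ w i ∧ w i < ((k : ℝ) + 1) / n

theorem strata_of_stratified_net_are_nets
    (m s t : ℕ) (hs : 1 ≤ s) (htm : t ≤ m)
    (z : Fin (2 ^ m) → Fin (s + 1) → ℝ)
    (hz01 : ∀ i j, 0 ≤ z i j ∧ z i j < 1)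
    (hnet : IsNetOn t m (s + 1) Finset.univ z)
    (hstrat : ∀ j : Fin (s + 1), Stratified (2 ^ m) (fun i => z i j))
    (L : ℕ) (hL : 2 ≤ L) (κ : ℕ → ℕ)
    (hκ1 : ∀ ℓ, ℓ < L → 1 ≤ κ ℓ)
    (hκm : ∀ ℓ, ℓ < L → κ ℓ < m)
    (hmono : ∀ r r', r ≤ r' → r' < L → κ r ≤ κ r')
    (hsum : ∑ ℓ ∈ Finset.range L, ((2 : ℝ) ^ κ ℓ)⁻¹ = 1) :
    ∀ ℓ, ℓ < L →
      IsNetOn (min t (m - κ ℓ)) (m - κ ℓ) s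
        (Finset.univ.filter (fun i : Fin (2 ^ m) =>
          (∑ r ∈ Finset.range ℓ, ((2 : ℝ) ^ κ r)⁻¹) ≤ z i 0 ∧
          z i 0 < ∑ r ∈ Finset.range (ℓ + 1), ((2 : ℝ) ^ κ r)⁻¹))
        (fun i => fun j : Fin s => z i j.succ) := by
  intro ℓ hℓ
  have hK1 : 1 ≤ κ ℓ := hκ1 ℓ hℓ
  have hKm : κ ℓ < m := hκm ℓ hℓ
  set K := κ ℓ with hKdef
  set c0 : ℕ := ∑ r ∈ Finset.range ℓ, 2 ^ (K - κ r) with hc0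
  have h2K : (0:ℝ) < 2 ^ K := by positivity
  have hA : (c0 : ℝ) / 2 ^ K = ∑ r ∈ Finset.range ℓ, ((2:ℝ) ^ κ r)⁻¹ := by
    rw [hc0]
    push_cast
    rw [Finset.sum_div]
    refine Finset.sum_congr rfl fun r hr => ?_
    have hrK : κ r ≤ K := hmono r ℓ (Finset.mem_range.mp hr).le hℓ
    rw [inv_eq_one_div, div_eq_div_iff h2K.ne' (by positivity), one_mul, ← pow_add]
    congr 1
    omega
  have hB : ((c0:ℝ) + 1) / 2 ^ K = ∑ r ∈ Finset.range (ℓ+1), ((2:ℝ) ^ κ r)⁻¹ := by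
    rw [Finset.sum_range_succ, ← hA, ← hKdef, add_div, one_div]
  have hsum' : ∑ r ∈ Finset.range (ℓ+1), ((2:ℝ) ^ κ r)⁻¹ ≤ 1 := by
    rw [← hsum]
    refine Finset.sum_le_sum_of_subset_of_nonneg
      (Finset.range_subset_range.mpr (by omega)) (fun i _ _ => by positivity)
  have hC : c0 + 1 ≤ 2 ^ K := by
    have h1 : ((c0:ℝ) + 1) / 2 ^ K ≤ 1 := hB ▸ hsum'
    have h2 : ((c0:ℝ) + 1) ≤ 2 ^ K := (div_le_one h2K).mp h1
    exact_mod_cast h2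
  -- rewrite the stratum description using `c0`
  simp only [← hA, ← hB]
  -- basic facts about `n = 2^m`
  have hn0 : (0:ℝ) < (((2:ℕ) ^ m : ℕ) : ℝ) := by positivity
  have hn2 : (((2:ℕ) ^ m : ℕ) : ℝ) = 2 ^ K * 2 ^ (m - K) := by
    push_cast
    rw [← pow_add]
    congr 1
    omega
  set A : ℕ := c0 * 2 ^ (m - K) with hAdef
  set B : ℕ := (c0 + 1) * 2 ^ (m - K) with hBdef
  have hBn : B ≤ 2 ^ m := by
    calc B ≤ 2 ^ K * 2 ^ (m - K) := Nat.mul_le_mul_right _ hC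
    _ = 2 ^ m := by rw [← pow_add]; congr 1; omega
  have hAn : ((A : ℕ) : ℝ) / (((2:ℕ) ^ m : ℕ) : ℝ) = (c0:ℝ) / 2 ^ K := by
    rw [hn2, hAdef]
    push_cast
    rw [mul_div_mul_right _ _ (by positivity)]
  have hBn' : ((B : ℕ) : ℝ) / (((2:ℕ) ^ m : ℕ) : ℝ) = ((c0:ℝ) + 1) / 2 ^ K := by
    rw [hn2, hBdef]
    push_cast
    rw [mul_div_mul_right _ _ (by positivity)]
  -- the point selected by stratification in each small interval
  set f : Fin (2 ^ m) → Fin (2 ^ m) := fun k => (hstrat 0 k).choose with hfdef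
  have hf : ∀ k : Fin (2 ^ m),
      (k : ℝ) / (((2:ℕ) ^ m : ℕ) : ℝ) ≤ z (f k) 0 ∧
        z (f k) 0 < ((k : ℝ) + 1) / (((2:ℕ) ^ m : ℕ) : ℝ) :=
    fun k => (hstrat 0 k).choose_spec.1
  have key : ∀ (k i : Fin (2 ^ m)),
      (k : ℝ) / (((2:ℕ) ^ m : ℕ) : ℝ) ≤ z i 0 →
        z i 0 < ((k : ℝ) + 1) / (((2:ℕ) ^ m : ℕ) : ℝ) → i = f k :=
    fun k i h1 h2 => (hstrat 0 k).choose_spec.2 i ⟨h1, h2⟩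
  have hdivlt : ∀ a b : ℝ,
      a / (((2:ℕ) ^ m : ℕ) : ℝ) < b / (((2:ℕ) ^ m : ℕ) : ℝ) → a < b := by
    intro a b h
    have := mul_lt_mul_of_pos_right h hn0
    rwa [div_mul_cancel₀ _ hn0.ne', div_mul_cancel₀ _ hn0.ne'] at this
  have hfinj : Function.Injective f := by
    intro k₁ k₂ h
    obtain ⟨h1, h2⟩ := hf k₁
    obtain ⟨h3, h4⟩ := hf k₂
    rw [h] at h1 h2
    have e1 : (k₁:ℝ) < (k₂:ℝ) + 1 := hdivlt _ _ (h1.trans_lt h4)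
    have e2 : (k₂:ℝ) < (k₁:ℝ) + 1 := hdivlt _ _ (h3.trans_lt h2)
    have e1' : (k₁:ℕ) < (k₂:ℕ) + 1 := by exact_mod_cast e1
    have e2' : (k₂:ℕ) < (k₁:ℕ) + 1 := by exact_mod_cast e2
    exact Fin.ext (by omega)
  -- cardinality of the stratum
  have hcardS : (Finset.univ.filter (fun i : Fin (2 ^ m) =>
      (c0:ℝ) / 2 ^ K ≤ z i 0 ∧ z i 0 < ((c0:ℝ) + 1) / 2 ^ K)).card = 2 ^ (m - K) := by
    have hbij := Finset.card_bij
      (s := Finset.Ico A B)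
      (t := Finset.univ.filter (fun i : Fin (2 ^ m) =>
        (c0:ℝ) / 2 ^ K ≤ z i 0 ∧ z i 0 < ((c0:ℝ) + 1) / 2 ^ K))
      (fun a ha => f ⟨a, lt_of_lt_of_le (Finset.mem_Ico.mp ha).2 hBn⟩)
      ?_ ?_ ?_
    · have hBA : B = A + 2 ^ (m - K) := by rw [hAdef, hBdef]; ring
      rw [← hbij, Nat.card_Ico, hBA]
      exact Nat.add_sub_cancel_left _ _
    · -- maps into the stratum
      intro a ha
      obtain ⟨ha1, ha2⟩ := Finset.mem_Ico.mp ha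
      obtain ⟨h1, h2⟩ := hf ⟨a, lt_of_lt_of_le ha2 hBn⟩
      rw [Finset.mem_filter]
      refine ⟨Finset.mem_univ _, ?_, ?_⟩
      · refine le_trans ?_ h1
        rw [← hAn]
        gcongr
        all_goals exact_mod_cast ha1
      · refine h2.trans_le ?_
        rw [← hBn']
        gcongr
        all_goals exact_mod_cast ha2
    · intro a ha b hb hab
      simpa using congrArg Fin.val (hfinj hab)
    · -- surjectivity
      intro i hi
      rw [Finset.mem_filter] at hi
      obtain ⟨-, hlo, hhi⟩ := hi
      have hx0 : 0 ≤ z i 0 := (hz01 i 0).1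
      set a : ℕ := ⌊(((2:ℕ) ^ m : ℕ) : ℝ) * z i 0⌋₊ with hadef
      have hax : (a:ℝ) ≤ (((2:ℕ) ^ m : ℕ) : ℝ) * z i 0 := Nat.floor_le (by positivity)
      have hax2 : (((2:ℕ) ^ m : ℕ) : ℝ) * z i 0 < (a:ℝ) + 1 := Nat.lt_floor_add_one _
      have hlo' : ((A:ℕ):ℝ) / (((2:ℕ) ^ m : ℕ) : ℝ) ≤ z i 0 := by rw [hAn]; exact hlo
      have hhi' : z i 0 < ((B:ℕ):ℝ) / (((2:ℕ) ^ m : ℕ) : ℝ) := by rw [hBn']; exact hhi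
      have haA : A ≤ a := by
        apply Nat.le_floor
        have := (div_le_iff₀ hn0).mp hlo'
        linarith [this]
      have haB : a < B := by
        apply (Nat.floor_lt (by positivity)).mpr
        have := (lt_div_iff₀ hn0).mp hhi'
        linarith [this]
      have han : a < 2 ^ m := lt_of_lt_of_le haB hBn
      refine ⟨a, Finset.mem_Ico.mpr ⟨haA, haB⟩, ?_⟩
      refine (key ⟨a, han⟩ i ?_ ?_).symm
      · show (a:ℝ) / (((2:ℕ) ^ m : ℕ) : ℝ) ≤ z i 0
        rw [div_le_iff₀ hn0]
        linarith
      · show z i 0 < ((a:ℝ) + 1) / (((2:ℕ) ^ m : ℕ) : ℝ)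
        rw [lt_div_iff₀ hn0]
        linarith
  refine ⟨hcardS, ?_⟩
  intro k c hkc hks
  by_cases ht : t ≤ m - K
  · -- case t ≤ m - K : use the net property of z
    rw [min_eq_left ht] at hks
    have hc' : ∀ j : Fin (s+1), (Fin.cons c0 c : Fin (s+1) → ℕ) j <
        2 ^ (Fin.cons K k : Fin (s+1) → ℕ) j := by
      intro j
      refine Fin.cases ?_ ?_ j
      · simp only [Fin.cons_zero]
        omega
      · intro j
        simpa using hkc j
    have hksum : (∑ j, (Fin.cons K k : Fin (s+1) → ℕ) j) + t ≤ m := by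
      rw [Fin.sum_cons]
      omega
    have happ := hnet.2 (Fin.cons K k) (Fin.cons c0 c) hc' hksum
    rw [Fin.sum_cons] at happ
    calc ((Finset.univ.filter (fun i : Fin (2 ^ m) =>
          (c0:ℝ) / 2 ^ K ≤ z i 0 ∧ z i 0 < ((c0:ℝ) + 1) / 2 ^ K)).filter
          (fun i => ∀ j : Fin s, (c j : ℝ) / 2 ^ k j ≤ (fun i (j : Fin s) => z i j.succ) i j ∧
            (fun i (j : Fin s) => z i j.succ) i j < ((c j : ℝ) + 1) / 2 ^ k j)).card
        = (Finset.univ.filter (fun i : Fin (2 ^ m) =>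
            ∀ j : Fin (s+1), ((Fin.cons c0 c : Fin (s+1) → ℕ) j : ℝ) /
              2 ^ (Fin.cons K k : Fin (s+1) → ℕ) j ≤ z i j ∧
              z i j < (((Fin.cons c0 c : Fin (s+1) → ℕ) j : ℝ) + 1) /
                2 ^ (Fin.cons K k : Fin (s+1) → ℕ) j)).card := by
          congr 1
          ext i
          simp only [Finset.mem_filter, Finset.mem_univ, true_and,
            Fin.forall_fin_succ, Fin.cons_zero, Fin.cons_succ]
      _ = 2 ^ (m - (K + ∑ j, k j)) := happ
      _ = 2 ^ (m - K - ∑ j, k j) := by congr 1; omega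
  · -- case t > m - K : the interval must be trivial
    rw [min_eq_right (by omega)] at hks
    have hsum0 : ∑ j, k j = 0 := by omega
    have hk0 : ∀ j, k j = 0 :=
      fun j => Finset.sum_eq_zero_iff.mp hsum0 j (Finset.mem_univ j)
    have hc0' : ∀ j, c j = 0 := by
      intro j
      have := hkc j
      rw [hk0 j] at this
      simpa using this
    have hfe : ((Finset.univ.filter (fun i : Fin (2 ^ m) =>
        (c0:ℝ) / 2 ^ K ≤ z i 0 ∧ z i 0 < ((c0:ℝ) + 1) / 2 ^ K)).filter
        (fun i => ∀ j : Fin s, (c j : ℝ) / 2 ^ k j ≤ (fun i (j : Fin s) => z i j.succ) i j ∧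
          (fun i (j : Fin s) => z i j.succ) i j < ((c j : ℝ) + 1) / 2 ^ k j)) =
        Finset.univ.filter (fun i : Fin (2 ^ m) =>
          (c0:ℝ) / 2 ^ K ≤ z i 0 ∧ z i 0 < ((c0:ℝ) + 1) / 2 ^ K) := by
      apply Finset.filter_eq_self.mpr
      intro i _ j
      rw [hk0 j, hc0' j]
      simpa using ⟨(hz01 i j.succ).1, (hz01 i j.succ).2⟩
    rw [hfe, hcardS, hsum0]
    rfl
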